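/- Let A be an associative unital ℂ-algebra with the elements and relations described. Then for all t, h, k, b, p ∈ ℕ: (v) if b > 0 and k > 0, then X_t^{±(b;p|k;h)} = (1/k)·Σ_{z=1}^{k} z·X_t^{±((z);h)}·X_t^{±(b−1;p|k−z;h)}; and (vi) if b > 0, then (b−p+k)·X_t^{±(b;p|k;h)} = X_t^{±}·X_t^{±(b−1;p|k;h)} + Σ_{z=1}^{k} (z+1)·X_t^{±((z);h)}·X_t^{±(b−1;p|k−z;h)} (for both choices of sign ±). -/

import Mathlib

open Finset

/-- `X_t^{±((p);h)}`: for `p > 0`, `Σ_{w=0}^{p} C(p,w)·(−Q)^w·X_{t+p·h+w}`; for `p = 0`, `1`. -/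
noncomputable def Xbr {A : Type*} [Ring A] [Algebra ℂ A] (Q : ℂ) (X : ℕ → A) (t p h : ℕ) : A :=
  if p = 0 then 1
  else ∑ w ∈ Finset.range (p + 1), ((p.choose w : ℂ) * (-Q) ^ w) • X (t + p * h + w)

/-- Divided power `X_t^{(b)} = (X_t)^b / b!` for `b ≥ 0`, and `0` for `b < 0`. -/
noncomputable def Xdiv {A : Type*} [Ring A] [Algebra ℂ A] (X : ℕ → A) (t : ℕ) (b : ℤ) : A :=
  if b < 0 then 0 else ((b.toNat.factorial : ℂ))⁻¹ • X t ^ b.toNat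

/-- `X_t^{(λ;h)} = Π_{j≥1} (X_t^{((j);h)})^{m_j(λ)} / m_j(λ)!` for a partition `λ` of `k`
(the factors pairwise commute under the relations, so the choice of ordering of the
product over the parts of `λ` is immaterial). -/
noncomputable def Xpart {A : Type*} [Ring A] [Algebra ℂ A] (Q : ℂ) (X : ℕ → A) (t h k : ℕ)
    (lam : Nat.Partition k) : A :=
  (∏ j ∈ Finset.range (k + 1), ((lam.parts.count j).factorial : ℂ))⁻¹ •
    ((lam.parts.sort (· ≤ ·)).map fun j => Xbr Q X t j h).prod

/-- `X_t^{(b;p|k;h)} = Σ_{λ ⊢ k} X_t^{(λ;h)} · X_t^{(b−p−ℓ(λ))}`. -/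
noncomputable def Xbpkh {A : Type*} [Ring A] [Algebra ℂ A] (Q : ℂ) (X : ℕ → A)
    (t b p k h : ℕ) : A :=
  ∑ lam : Nat.Partition k,
    Xpart Q X t h k lam * Xdiv X t ((b : ℤ) - (p : ℤ) - (Multiset.card lam.parts : ℤ))

/-! Multiplying `X_t^{(b;p|k−z;h)}` by `X_t^{((z);h)}` inserts a part `z` into each partition
`μ ⊢ k − z`. As all the `X_t^{((j);h)}` commute, the resulting `λ ⊢ k` arises with coefficient
`m_z(μ) + 1 = m_z(λ)`, which the factorials in `X_t^{(λ;h)}` produce. Summing over `z` with a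
weight `c(z)` thus multiplies the `λ`-summand of `X_t^{(b+1;p|k;h)}` by `Σ_j m_j(λ) c(j)`: this
is `k` for `c(z) = z`, giving (v), and `k + ℓ(λ)` for `c(z) = z + 1`. Since
`X_t · X_t^{(b−p−ℓ)} = (b+1−p−ℓ) X_t^{(b+1−p−ℓ)}`, adding `X_t · X_t^{(b;p|k;h)}` to the
latter sum gives (vi). -/

open Nat

theorem Multiset.prod_map_sort_cons {α M : Type*} [LinearOrder α] [Monoid M] (f : α → M)
    (hf : ∀ a b, Commute (f a) (f b)) (z : α) (s : Multiset α) :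
    (((z ::ₘ s).sort (· ≤ ·)).map f).prod = f z * ((s.sort (· ≤ ·)).map f).prod := by
  have hperm : ((z ::ₘ s).sort (· ≤ ·)).Perm (z :: s.sort (· ≤ ·)) := by
    rw [← Multiset.coe_eq_coe, Multiset.sort_eq, ← Multiset.cons_coe, Multiset.sort_eq]
  rw [(hperm.map f).prod_eq' (List.pairwise_map.2 (List.pairwise_of_forall fun a b => hf a b)),
    List.map_cons, List.prod_cons]

theorem Multiset.prod_factorial_count_cons {α : Type*} [DecidableEq α] (s : Multiset α)
    {S : Finset α} {z : α} (hz : z ∈ S) :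
    ∏ j ∈ S, ((z ::ₘ s).count j)! = (s.count z + 1) * ∏ j ∈ S, (s.count j)! := by
  rw [← mul_prod_erase _ _ hz, ← mul_prod_erase _ _ hz, Multiset.count_cons_self,
    factorial_succ, mul_assoc]
  congr 2
  exact prod_congr rfl fun j hj => by rw [Multiset.count_cons_of_ne (ne_of_mem_erase hj)]

namespace Nat.Partition

theorem prod_factorial_count_range {n N : ℕ} (μ : n.Partition) (h : n ≤ N) :
    ∏ j ∈ range (N + 1), (μ.parts.count j)! = ∏ j ∈ range (n + 1), (μ.parts.count j)! := by
  refine (prod_subset (range_subset_range.2 (by omega)) fun j _ hj => ?_).symm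
  have hcount : μ.parts.count j = 0 := Multiset.count_eq_zero.2 fun hmem =>
    hj (mem_range.2 (lt_succ_of_le (le_of_mem_parts hmem)))
  rw [hcount, factorial_zero]

theorem sum_range_count_nsmul {M : Type*} [AddCommMonoid M] {k : ℕ} (lam : k.Partition)
    (c : ℕ → M) :
    ∑ z ∈ range k, lam.parts.count (z + 1) • c (z + 1) = (lam.parts.map c).sum := by
  have hsub : lam.parts.toFinset ⊆ range (k + 1) := fun j hj =>
    mem_range.2 (lt_succ_of_le (le_of_mem_parts (Multiset.mem_toFinset.1 hj)))
  have hzero : lam.parts.count 0 = 0 := Multiset.count_eq_zero.2 fun h => (lam.parts_pos h).ne rfl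
  rw [Finset.sum_multiset_map_count, sum_subset hsub fun j _ hj => by
    rw [Multiset.count_eq_zero.2 (Multiset.mem_toFinset.not.1 hj), zero_smul],
    sum_range_succ', hzero, zero_smul, add_zero]

end Nat.Partition

section DividedPowers

variable {A : Type*} [Ring A] [Algebra ℂ A] (X : ℕ → A) (t : ℕ)

theorem Xdiv_natCast (n : ℕ) : Xdiv X t n = ((n ! : ℂ))⁻¹ • X t ^ n := by
  simp [Xdiv]

theorem X_mul_Xdiv_natCast (n : ℕ) :
    X t * Xdiv X t n = ((n + 1 : ℕ) : ℂ) • Xdiv X t (n + 1 : ℕ) := by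
  rw [Xdiv_natCast, Xdiv_natCast, mul_smul_comm, (pow_succ' (X t) n).symm, smul_smul,
    factorial_succ, cast_mul, mul_inv, ← mul_assoc,
    mul_inv_cancel₀ (cast_ne_zero.2 (succ_ne_zero n)), one_mul]

theorem X_mul_Xdiv (m : ℤ) : X t * Xdiv X t m = ((m + 1 : ℤ) : ℂ) • Xdiv X t (m + 1) := by
  rcases lt_trichotomy m (-1) with hm | rfl | hm
  · simp [Xdiv, show m < 0 by omega, show m + 1 < 0 by omega]
  · simp [Xdiv]
  · lift m to ℕ using (by omega : 0 ≤ m)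
    exact_mod_cast X_mul_Xdiv_natCast X t m

end DividedPowers

section Summands

variable {A : Type*} [Ring A] [Algebra ℂ A] (Q : ℂ) {X : ℕ → A}

theorem commute_Xbr_right {a : A} (ha : ∀ n, Commute a (X n)) (t p h : ℕ) :
    Commute a (Xbr Q X t p h) := by
  unfold Xbr
  split_ifs
  · exact Commute.one_right a
  · exact Commute.sum_right _ _ _ fun w _ => (ha _).smul_right _

theorem commute_Xpart_right {a : A} (ha : ∀ n, Commute a (X n)) (t h k : ℕ)
    (lam : k.Partition) : Commute a (Xpart Q X t h k lam) :=
  (Commute.list_prod_right _ _ fun _ hx => by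
    obtain ⟨j, -, rfl⟩ := List.mem_map.1 hx
    exact commute_Xbr_right Q ha t j h).smul_right _

theorem commute_Xbr_Xbr (hX : ∀ m n, Commute (X m) (X n)) (t p q h : ℕ) :
    Commute (Xbr Q X t p h) (Xbr Q X t q h) :=
  commute_Xbr_right Q (fun n => (commute_Xbr_right Q (hX n) t p h).symm) t q h

variable (X) (t p h : ℕ)

noncomputable def XpartDiv (b : ℕ) {k : ℕ} (lam : k.Partition) : A :=
  Xpart Q X t h k lam * Xdiv X t ((b : ℤ) - (p : ℤ) - (Multiset.card lam.parts : ℤ))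

theorem Xbpkh_eq_sum_XpartDiv (b k : ℕ) :
    Xbpkh Q X t b p k h = ∑ lam : k.Partition, XpartDiv Q X t p h b lam :=
  rfl

variable {X}

theorem Xbr_mul_Xpart (hX : ∀ m n, Commute (X m) (X n)) {z m k : ℕ} {μ : m.Partition}
    {lam : k.Partition} (hlam : lam.parts = z ::ₘ μ.parts) :
    Xbr Q X t z h * Xpart Q X t h m μ =
      ((μ.parts.count z + 1 : ℕ) : ℂ) • Xpart Q X t h k lam := by
  have hk : k = z + m := by rw [← lam.parts_sum, hlam, Multiset.sum_cons, μ.parts_sum]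
  have hfact : ∏ j ∈ range (k + 1), (lam.parts.count j)! =
      (μ.parts.count z + 1) * ∏ j ∈ range (m + 1), (μ.parts.count j)! := by
    rw [hlam, Multiset.prod_factorial_count_cons _ (mem_range.2 (by omega)),
      μ.prod_factorial_count_range (by omega)]
  rw [Xpart, Xpart, ← cast_prod, ← cast_prod, hfact, hlam,
    Multiset.prod_map_sort_cons _ (fun a b => commute_Xbr_Xbr Q hX t a b h), mul_smul_comm,
    smul_smul, cast_mul, mul_inv, mul_inv_cancel_left₀ (cast_ne_zero.2 (succ_ne_zero _))]

theorem Xbr_mul_XpartDiv (hX : ∀ m n, Commute (X m) (X n)) (b : ℕ) {z m k : ℕ}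
    {μ : m.Partition} {lam : k.Partition} (hlam : lam.parts = z ::ₘ μ.parts) :
    Xbr Q X t z h * XpartDiv Q X t p h b μ =
      ((μ.parts.count z + 1 : ℕ) : ℂ) • XpartDiv Q X t p h (b + 1) lam := by
  rw [XpartDiv, XpartDiv, ← mul_assoc, Xbr_mul_Xpart Q t h hX hlam, smul_mul_assoc, hlam,
    Multiset.card_cons]
  congr 3
  push_cast
  ring

theorem Xbr_mul_Xbpkh (hX : ∀ m n, Commute (X m) (X n)) (b : ℕ) {z k : ℕ} (hz : 1 ≤ z)
    (hzk : z ≤ k) :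
    Xbr Q X t z h * Xbpkh Q X t b p (k - z) h =
      ∑ lam : k.Partition, (lam.parts.count z : ℂ) • XpartDiv Q X t p h (b + 1) lam := by
  let e := Partition.partitionWithPartEquiv hz hzk
  have he (μ) := Partition.partitionWithPartEquiv_symm_apply_parts hz hzk μ
  calc _ = ∑ μ : (k - z).Partition, Xbr Q X t z h * XpartDiv Q X t p h b μ := mul_sum _ _ _
    _ = ∑ μ, ((e.symm μ).1.parts.count z : ℂ) • XpartDiv Q X t p h (b + 1) (e.symm μ).1 :=
        sum_congr rfl fun μ _ => by
          rw [Xbr_mul_XpartDiv Q t p h hX b (he μ), he μ, Multiset.count_cons_self]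
    _ = ∑ lam : {lam : k.Partition // z ∈ lam.parts},
          (lam.1.parts.count z : ℂ) • XpartDiv Q X t p h (b + 1) lam.1 :=
        e.symm.sum_comp fun lam => (lam.1.parts.count z : ℂ) • XpartDiv Q X t p h (b + 1) lam.1
    _ = ∑ lam with z ∈ lam.parts, (lam.parts.count z : ℂ) • XpartDiv Q X t p h (b + 1) lam :=
        (sum_subtype _ (fun lam => by simp)
          fun lam => (lam.parts.count z : ℂ) • XpartDiv Q X t p h (b + 1) lam).symm
    _ = _ := sum_filter_of_ne fun lam _ hne => by_contra fun hz' =>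
        hne (by rw [Multiset.count_eq_zero.2 hz', cast_zero, zero_smul])

theorem sum_smul_Xbr_mul_Xbpkh (hX : ∀ m n, Commute (X m) (X n)) (b k : ℕ) (c : ℕ → ℂ) :
    ∑ z ∈ range k, c (z + 1) • (Xbr Q X t (z + 1) h * Xbpkh Q X t b p (k - (z + 1)) h) =
      ∑ lam : k.Partition, (lam.parts.map c).sum • XpartDiv Q X t p h (b + 1) lam := by
  calc _ = ∑ z ∈ range k, ∑ lam : k.Partition,
        (lam.parts.count (z + 1) • c (z + 1)) • XpartDiv Q X t p h (b + 1) lam :=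
      sum_congr rfl fun z hz => by
        rw [Xbr_mul_Xbpkh Q t p h hX b (le_add_left 1 z) (mem_range.1 hz), smul_sum]
        simp only [smul_smul, nsmul_eq_mul, mul_comm]
    _ = _ := by
      rw [sum_comm]
      exact sum_congr rfl fun lam _ => by rw [← sum_smul, lam.sum_range_count_nsmul]

theorem X_mul_Xbpkh (hX : ∀ m n, Commute (X m) (X n)) (b k : ℕ) :
    X t * Xbpkh Q X t b p k h = ∑ lam : k.Partition,
      (((b + 1 : ℕ) : ℂ) - p - Multiset.card lam.parts) • XpartDiv Q X t p h (b + 1) lam := by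
  refine (mul_sum _ _ _).trans (sum_congr rfl fun lam _ => ?_)
  have harg : (b : ℤ) - p - Multiset.card lam.parts + 1 =
      ((b + 1 : ℕ) : ℤ) - p - Multiset.card lam.parts := by
    push_cast; ring
  unfold XpartDiv
  rw [← mul_assoc, (commute_Xpart_right Q (hX t) t h k lam).eq, mul_assoc,
    X_mul_Xdiv, harg, mul_smul_comm]
  push_cast
  rfl

theorem Xbpkh_eq_inv_smul_sum (hX : ∀ m n, Commute (X m) (X n)) {b k : ℕ} (hb : b ≠ 0)
    (hk : k ≠ 0) :
    Xbpkh Q X t b p k h = (k : ℂ)⁻¹ • ∑ z ∈ range k,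
      ((z : ℂ) + 1) • (Xbr Q X t (z + 1) h * Xbpkh Q X t (b - 1) p (k - (z + 1)) h) := by
  obtain ⟨b, rfl⟩ := exists_eq_add_one_of_ne_zero hb
  have hweight (lam : k.Partition) : (lam.parts.map fun n : ℕ => (n : ℂ)).sum = k := by
    rw [← cast_multiset_sum, lam.parts_sum]
  have hsum := sum_smul_Xbr_mul_Xbpkh Q t p h hX b k fun n => (n : ℂ)
  simp only [cast_add_one, hweight] at hsum
  rw [Nat.add_sub_cancel, hsum, ← smul_sum, ← Xbpkh_eq_sum_XpartDiv,
    inv_smul_smul₀ (cast_ne_zero.2 hk)]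

theorem smul_Xbpkh_eq_X_mul_add_sum (hX : ∀ m n, Commute (X m) (X n)) {b k : ℕ}
    (hb : b ≠ 0) :
    ((b : ℂ) - p + k) • Xbpkh Q X t b p k h =
      X t * Xbpkh Q X t (b - 1) p k h + ∑ z ∈ range k,
        ((z : ℂ) + 2) • (Xbr Q X t (z + 1) h * Xbpkh Q X t (b - 1) p (k - (z + 1)) h) := by
  obtain ⟨b, rfl⟩ := exists_eq_add_one_of_ne_zero hb
  have hweight (lam : k.Partition) :
      (lam.parts.map fun n : ℕ => (n : ℂ) + 1).sum = k + Multiset.card lam.parts := by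
    rw [Multiset.sum_map_add, ← cast_multiset_sum, lam.parts_sum, Multiset.map_const',
      Multiset.sum_replicate, nsmul_one]
  have hsum := sum_smul_Xbr_mul_Xbpkh Q t p h hX b k fun n => (n : ℂ) + 1
  simp only [cast_add_one, add_assoc, one_add_one_eq_two, hweight] at hsum
  rw [Nat.add_sub_cancel, hsum, X_mul_Xbpkh Q t p h hX, ← sum_add_distrib,
    Xbpkh_eq_sum_XpartDiv, smul_sum]
  refine sum_congr rfl fun lam _ => ?_
  rw [← add_smul]
  congr 1
  push_cast
  ring

end Summands

theorem stmt4_general {A : Type*} [Ring A] [Algebra ℂ A] (Q : ℂ) (Xp Xm : ℕ → A)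
    (hL4p : ∀ s t, Xp t * Xp s = Xp s * Xp t)
    (hL4m : ∀ s t, Xm t * Xm s = Xm s * Xm t)
    (t h k b p : ℕ) :
    (b ≠ 0 → k ≠ 0 →
      Xbpkh Q Xp t b p k h =
        (k : ℂ)⁻¹ • ∑ z ∈ Finset.range k,
          ((z : ℂ) + 1) • (Xbr Q Xp t (z + 1) h * Xbpkh Q Xp t (b - 1) p (k - (z + 1)) h)) ∧
    (b ≠ 0 → k ≠ 0 →
      Xbpkh Q Xm t b p k h =
        (k : ℂ)⁻¹ • ∑ z ∈ Finset.range k,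
          ((z : ℂ) + 1) • (Xbr Q Xm t (z + 1) h * Xbpkh Q Xm t (b - 1) p (k - (z + 1)) h)) ∧
    (b ≠ 0 →
      ((b : ℂ) - (p : ℂ) + (k : ℂ)) • Xbpkh Q Xp t b p k h =
        Xp t * Xbpkh Q Xp t (b - 1) p k h +
          ∑ z ∈ Finset.range k,
            ((z : ℂ) + 2) • (Xbr Q Xp t (z + 1) h * Xbpkh Q Xp t (b - 1) p (k - (z + 1)) h)) ∧
    (b ≠ 0 →
      ((b : ℂ) - (p : ℂ) + (k : ℂ)) • Xbpkh Q Xm t b p k h =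
        Xm t * Xbpkh Q Xm t (b - 1) p k h +
          ∑ z ∈ Finset.range k,
            ((z : ℂ) + 2) • (Xbr Q Xm t (z + 1) h * Xbpkh Q Xm t (b - 1) p (k - (z + 1)) h)) := by
  have hp : ∀ m n, Commute (Xp m) (Xp n) := fun m n => hL4p n m
  have hm : ∀ m n, Commute (Xm m) (Xm n) := fun m n => hL4m n m
  exact ⟨Xbpkh_eq_inv_smul_sum Q t p h hp, Xbpkh_eq_inv_smul_sum Q t p h hm,
    smul_Xbpkh_eq_X_mul_add_sum Q t p h hp, smul_Xbpkh_eq_X_mul_add_sum Q t p h hm⟩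

theorem stmt4 {A : Type*} [Ring A] [Algebra ℂ A] (Q : ℂ) (Xp Xm J : ℕ → A)
    (hL1 : ∀ s t, J s * J t = J t * J s)
    (hL2p : ∀ s t, J s * Xp t - Xp t * J s = (2 : ℂ) • Xp (s + t))
    (hL2m : ∀ s t, J s * Xm t - Xm t * J s = -((2 : ℂ) • Xm (s + t)))
    (hL3 : ∀ s t, Xp t * Xm s - Xm s * Xp t = J (s + t) - Q • J (s + t + 1))
    (hL4p : ∀ s t, Xp t * Xp s = Xp s * Xp t)
    (hL4m : ∀ s t, Xm t * Xm s = Xm s * Xm t)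
    (t h k b p : ℕ) :
    (b ≠ 0 → k ≠ 0 →
      Xbpkh Q Xp t b p k h =
        (k : ℂ)⁻¹ • ∑ z ∈ Finset.range k,
          ((z : ℂ) + 1) • (Xbr Q Xp t (z + 1) h * Xbpkh Q Xp t (b - 1) p (k - (z + 1)) h)) ∧
    (b ≠ 0 → k ≠ 0 →
      Xbpkh Q Xm t b p k h =
        (k : ℂ)⁻¹ • ∑ z ∈ Finset.range k,
          ((z : ℂ) + 1) • (Xbr Q Xm t (z + 1) h * Xbpkh Q Xm t (b - 1) p (k - (z + 1)) h)) ∧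
    (b ≠ 0 →
      ((b : ℂ) - (p : ℂ) + (k : ℂ)) • Xbpkh Q Xp t b p k h =
        Xp t * Xbpkh Q Xp t (b - 1) p k h +
          ∑ z ∈ Finset.range k,
            ((z : ℂ) + 2) • (Xbr Q Xp t (z + 1) h * Xbpkh Q Xp t (b - 1) p (k - (z + 1)) h)) ∧
    (b ≠ 0 →
      ((b : ℂ) - (p : ℂ) + (k : ℂ)) • Xbpkh Q Xm t b p k h =
        Xm t * Xbpkh Q Xm t (b - 1) p k h +
          ∑ z ∈ Finset.range k,
            ((z : ℂ) + 2) • (Xbr Q Xm t (z + 1) h * Xbpkh Q Xm t (b - 1) p (k - (z + 1)) h)) :=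
  stmt4_general Q Xp Xm hL4p hL4m t h k b p
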